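/- arXiv:1910.00563 — 4 statements merged into one kernel-verified Lean document; each statement's English description precedes it below -/
import Mathlib

section
/- Let Y be a Suslinian continuum and let F ⊆ Y be a nonempty proper closed subset. Then the open set Y ∖ F has at most countably many connected components. -/
open Set

/-- **Boundary bumping (closed version).** In a compact connected Hausdorff space, the
connected component of a point in a proper closed subset meets the closure of the
complement. -/
theorem bump_closed {X : Type*} [TopologicalSpace X] [CompactSpace X] [T2Space X]
    [ConnectedSpace X] {A : Set X} (hA : IsClosed A) (hAne : A ≠ Set.univ) {x : X} (hx : x ∈ A) :
    (connectedComponentIn A x ∩ closure Aᶜ).Nonempty := by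
  by_contra hcon
  rw [Set.not_nonempty_iff_eq_empty] at hcon
  haveI : CompactSpace A := isCompact_iff_compactSpace.mp hA.isCompact
  set x' : A := ⟨x, hx⟩
  set T : Set A := Subtype.val ⁻¹' closure Aᶜ with hTdef
  have hTc : IsClosed T := isClosed_closure.preimage continuous_subtype_val
  have hccT : T ∩ connectedComponent x' = ∅ := by
    ext z
    simp only [Set.mem_inter_iff, Set.mem_empty_iff_false, iff_false, not_and]
    intro hzT hzcc
    have : (z : X) ∈ connectedComponentIn A x ∩ closure Aᶜ := by
      refine ⟨?_, hzT⟩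
      rw [connectedComponentIn_eq_image hx]
      exact ⟨z, hzcc, rfl⟩
    rw [hcon] at this
    exact this
  -- use the clopen description of the connected component
  have hcceq := connectedComponent_eq_iInter_isClopen x'
  rw [hcceq] at hccT
  obtain ⟨u, hu⟩ := hTc.isCompact.elim_finite_subfamily_closed
    (fun s : { s : Set A // IsClopen s ∧ x' ∈ s } => (s : Set A))
    (fun s => s.2.1.1) hccT
  set V : Set A := ⋂ i ∈ u, (i : Set A) with hVdef
  have hVclopen : IsClopen V := isClopen_biInter_finset fun i _ => i.2.1
  have hxV : x' ∈ V := Set.mem_iInter₂.2 fun i _ => i.2.2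
  have hVT : V ∩ T = ∅ := by rw [Set.inter_comm]; exact hu
  -- push V down to X
  set W : Set X := Subtype.val '' V with hWdef
  have hWA : W ⊆ A := by rintro w ⟨z, _, rfl⟩; exact z.2
  have hWclosure : W ∩ closure Aᶜ = ∅ := by
    ext w
    simp only [Set.mem_inter_iff, Set.mem_empty_iff_false, iff_false, not_and]
    rintro ⟨z, hzV, rfl⟩ hwc
    have : z ∈ V ∩ T := ⟨hzV, hwc⟩
    rw [hVT] at this
    exact this
  have hWint : W ⊆ interior A := by
    intro w hw
    have : w ∉ closure Aᶜ := fun hc => by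
      have : w ∈ W ∩ closure Aᶜ := ⟨hw, hc⟩
      rw [hWclosure] at this; exact this
    rwa [closure_compl, Set.mem_compl_iff, not_not] at this
  have hWclosed : IsClosed W :=
    (hVclopen.1.isCompact.image continuous_subtype_val).isClosed
  have hWopen : IsOpen W := by
    obtain ⟨O, hO, hOV⟩ := isOpen_induced_iff.mp hVclopen.2
    have hWOA : W = O ∩ A := by rw [hWdef, ← hOV, Subtype.image_preimage_coe]; exact Set.inter_comm _ _
    have : W = O ∩ interior A := by
      apply Set.Subset.antisymm
      · exact fun w hw => ⟨(hWOA ▸ hw).1, hWint hw⟩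
      · intro w hw
        rw [hWOA]
        exact ⟨hw.1, interior_subset hw.2⟩
    rw [this]
    exact hO.inter isOpen_interior
  have : W = ∅ ∨ W = Set.univ := isClopen_iff.mp ⟨hWclosed, hWopen⟩
  rcases this with h | h
  · have : x ∈ W := ⟨x', hxV, rfl⟩
    rw [h] at this; exact this
  · exact hAne (Set.Subset.antisymm (Set.subset_univ _) (h ▸ hWA))

/-- **Boundary bumping (open version).** The closure of a connected component of an open
subset with nonempty complement meets the complement. -/
theorem bump_open {X : Type*} [TopologicalSpace X] [CompactSpace X] [T2Space X]
    [ConnectedSpace X] {U : Set X} (hU : IsOpen U) (hUc : Uᶜ.Nonempty) {x : X} (hx : x ∈ U) :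
    (closure (connectedComponentIn U x) ∩ Uᶜ).Nonempty := by
  by_contra hcon
  rw [Set.not_nonempty_iff_eq_empty] at hcon
  set C := connectedComponentIn U x with hCdef
  have hCU : closure C ⊆ U := by
    intro z hz
    by_contra hzU
    have : z ∈ closure C ∩ Uᶜ := ⟨hz, hzU⟩
    rw [hcon] at this; exact this
  obtain ⟨V, hVopen, hCV, hVU⟩ := normal_exists_closure_subset isClosed_closure hU hCU
  have hxC : x ∈ C := mem_connectedComponentIn hx
  have hxA : x ∈ closure V := subset_closure (hCV (subset_closure hxC))
  have hAne : closure V ≠ Set.univ := by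
    intro h
    obtain ⟨p, hp⟩ := hUc
    exact hp (hVU (h ▸ Set.mem_univ p))
  obtain ⟨y, hycc, hycl⟩ := bump_closed isClosed_closure hAne hxA
  have hQC : connectedComponentIn (closure V) x ⊆ C :=
    isPreconnected_connectedComponentIn.subset_connectedComponentIn
      (mem_connectedComponentIn hxA) ((connectedComponentIn_subset _ _).trans hVU)
  have hyint : y ∈ interior (closure V) :=
    interior_maximal subset_closure hVopen (hCV (subset_closure (hQC hycc)))
  rw [closure_compl] at hycl
  exact hycl hyint

/-- A connected component of a subset is relatively closed: its closure intersected with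
the subset is itself. -/
theorem closure_inter_connectedComponentIn {X : Type*} [TopologicalSpace X]
    {U : Set X} {x : X} (hx : x ∈ U) :
    closure (connectedComponentIn U x) ∩ U ⊆ connectedComponentIn U x := by
  rintro y ⟨hyc, hyU⟩
  rw [connectedComponentIn_eq_image hx] at hyc ⊢
  have : (⟨y, hyU⟩ : U) ∈ closure (connectedComponent (⟨x, hx⟩ : U)) := by
    rw [closure_subtype]; exact hyc
  rw [isClosed_connectedComponent.closure_eq] at this
  exact ⟨⟨y, hyU⟩, this, rfl⟩

/-- Every connected component of an open set with nonempty complement in a compact connected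
Hausdorff space contains a nondegenerate subcontinuum. -/
theorem exists_continuum_in_component {X : Type*} [TopologicalSpace X] [CompactSpace X]
    [T2Space X] [ConnectedSpace X] {U : Set X} (hU : IsOpen U) (hUc : Uᶜ.Nonempty) {x : X}
    (hx : x ∈ U) :
    ∃ M : Set X, IsCompact M ∧ IsConnected M ∧ M.Nontrivial ∧
      M ⊆ connectedComponentIn U x := by
  classical
  set C := connectedComponentIn U x with hCdef
  set K := closure C with hKdef
  obtain ⟨p, hpK, hpU⟩ := bump_open hU hUc hx
  have hCconn : IsConnected C := isConnected_connectedComponentIn_iff.mpr hx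
  have hKconn : IsConnected K := hCconn.closure
  have hKcomp : IsCompact K := isClosed_closure.isCompact
  haveI : CompactSpace K := isCompact_iff_compactSpace.mp hKcomp
  haveI : ConnectedSpace K := Subtype.connectedSpace hKconn
  obtain ⟨B, hBnhds, hBclosed, hBU⟩ := exists_mem_nhds_isClosed_subset (hU.mem_nhds hx)
  have hxK : x ∈ K := subset_closure (mem_connectedComponentIn hx)
  set x' : K := ⟨x, hxK⟩
  set A' : Set K := Subtype.val ⁻¹' B with hA'def
  have hA'closed : IsClosed A' := hBclosed.preimage continuous_subtype_val
  have hx'A' : x' ∈ A' := show (x : X) ∈ B from mem_of_mem_nhds hBnhds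
  have hA'ne : A' ≠ Set.univ := by
    intro h
    have : (⟨p, hpK⟩ : K) ∈ A' := h ▸ Set.mem_univ _
    exact hpU (hBU this)
  obtain ⟨y', hy'cc, hy'cl⟩ := bump_closed hA'closed hA'ne hx'A'
  set Q : Set X := Subtype.val '' connectedComponentIn A' x' with hQdef
  have hQconn : IsConnected Q := by
    refine ⟨⟨x, ?_⟩, isPreconnected_connectedComponentIn.image _
      continuous_subtype_val.continuousOn⟩
    exact ⟨x', mem_connectedComponentIn hx'A', rfl⟩
  refine ⟨closure Q, isClosed_closure.isCompact, hQconn.closure, ?_, ?_⟩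
  · -- nontrivial : x and y' are distinct points of closure Q
    have hxQ : x ∈ Q := ⟨x', mem_connectedComponentIn hx'A', rfl⟩
    have hyQ : (y' : X) ∈ Q := ⟨y', hy'cc, rfl⟩
    refine ⟨x, subset_closure hxQ, y', subset_closure hyQ, ?_⟩
    intro h
    have hx'int : x' ∈ interior A' := by
      apply interior_maximal (Set.preimage_mono interior_subset)
        (isOpen_interior.preimage continuous_subtype_val)
      exact mem_interior_iff_mem_nhds.mpr hBnhds
    have : y' = x' := Subtype.ext h.symm
    rw [this, closure_compl] at hy'cl
    exact hy'cl hx'int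
  · -- closure Q ⊆ C
    have hQKB : Q ⊆ K ∩ B := by
      rw [hQdef]
      rintro q ⟨z, hz, rfl⟩
      exact ⟨z.2, connectedComponentIn_subset A' x' hz⟩
    have hKB : IsClosed (K ∩ B) := isClosed_closure.inter hBclosed
    have h1 : closure Q ⊆ K ∩ B := hKB.closure_subset_iff.mpr hQKB
    intro z hz
    have := h1 hz
    exact closure_inter_connectedComponentIn hx ⟨this.1, hBU this.2⟩

/-- Let `Y` be a Suslinian continuum and `F ⊆ Y` a nonempty proper closed
subset. Then `Y \ F` has at most countably many connected components. -/
theorem stmt_10 {Y : Type*} [TopologicalSpace Y] [CompactSpace Y] [ConnectedSpace Y]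
    [TopologicalSpace.MetrizableSpace Y] [Nontrivial Y]
    (hSus : ∀ C : Set (Set Y),
      (∀ S ∈ C, IsCompact S ∧ IsConnected S ∧ S.Nontrivial) →
      C.Pairwise Disjoint → C.Countable)
    (F : Set Y) (hFclosed : IsClosed F) (hFne : F.Nonempty) (hFproper : F ≠ Set.univ) :
    {C : Set Y | ∃ x ∈ Fᶜ, C = connectedComponentIn Fᶜ x}.Countable := by
  classical
  set U : Set Y := Fᶜ with hUdef
  have hUopen : IsOpen U := hFclosed.isOpen_compl
  have hUc : Uᶜ.Nonempty := by rwa [hUdef, compl_compl]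
  set 𝒞 := {C : Set Y | ∃ x ∈ U, C = connectedComponentIn U x} with h𝒞def
  have key : ∀ C ∈ 𝒞, ∃ M : Set Y,
      (IsCompact M ∧ IsConnected M ∧ M.Nontrivial) ∧ M ⊆ C := by
    rintro C ⟨x, hxU, rfl⟩
    obtain ⟨M, h1, h2, h3, h4⟩ := exists_continuum_in_component hUopen hUc hxU
    exact ⟨M, ⟨h1, h2, h3⟩, h4⟩
  choose! f hf1 hf2 using key
  -- components are pairwise disjoint
  have hdisj : ∀ C ∈ 𝒞, ∀ C' ∈ 𝒞, C ≠ C' → Disjoint C C' := by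
    rintro C ⟨a, haU, rfl⟩ C' ⟨b, hbU, rfl⟩ hne
    rw [Set.disjoint_left]
    intro z hz hz'
    exact hne ((connectedComponentIn_eq hz).trans (connectedComponentIn_eq hz').symm)
  have hDcount : (f '' 𝒞).Countable := by
    apply hSus
    · rintro S ⟨C, hC, rfl⟩
      exact hf1 C hC
    · rintro S ⟨C, hC, rfl⟩ T ⟨C', hC', rfl⟩ hne
      have hCC' : C ≠ C' := fun h => hne (h ▸ rfl)
      exact Set.disjoint_of_subset (hf2 C hC) (hf2 C' hC') (hdisj C hC C' hC' hCC')
  apply Set.countable_of_injective_of_countable_image _ hDcount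
  intro C hC C' hC' hfeq
  by_contra hne
  obtain ⟨⟨m, hm⟩, _⟩ := (hf1 C hC).2.1
  exact Set.disjoint_left.mp (hdisj C hC C' hC' hne) (hf2 C hC hm)
    (hf2 C' hC' (hfeq ▸ hm))
end

section
/- Let Y be a nonempty compact metric space and let U ⊆ Y be a nonempty open subset which has at most countably many connected components. Then some connected component of U has nonempty interior in Y. -/
open Set

/-- A connected component of `U` is relatively closed in `U`. -/
lemma closure_connectedComponentIn_inter {Y : Type*} [TopologicalSpace Y] {U : Set Y} {x : Y}
    (hx : x ∈ U) : closure (connectedComponentIn U x) ∩ U ⊆ connectedComponentIn U x := by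
  rintro z ⟨hzc, hzU⟩
  rw [connectedComponentIn_eq_image hx] at hzc ⊢
  have hemb : Topology.IsEmbedding ((↑) : U → Y) := Topology.IsEmbedding.subtypeVal
  have : (⟨z, hzU⟩ : U) ∈ closure (connectedComponent (⟨x, hx⟩ : U)) := by
    rw [hemb.closure_eq_preimage_closure_image]
    exact hzc
  rw [isClosed_connectedComponent.closure_eq] at this
  exact ⟨⟨z, hzU⟩, this, rfl⟩

/-- Let `Y` be a nonempty compact metric space and `U ⊆ Y` a nonempty open
subset with at most countably many connected components. Then some connected component of `U`
has nonempty interior in `Y`. -/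
theorem stmt_11 {Y : Type*} [MetricSpace Y] [CompactSpace Y] [Nonempty Y]
    (U : Set Y) (hUopen : IsOpen U) (hUne : U.Nonempty)
    (hcount : {C : Set Y | ∃ x ∈ U, C = connectedComponentIn U x}.Countable) :
    ∃ x ∈ U, (interior (connectedComponentIn U x)).Nonempty := by
  set S := {C : Set Y | ∃ x ∈ U, C = connectedComponentIn U x} with hS
  set T : Set (Set Y) := insert Uᶜ (closure '' S) with hT
  have hTc : ∀ s ∈ T, IsClosed s := by
    rintro s (rfl | ⟨C, -, rfl⟩)
    · exact hUopen.isClosed_compl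
    · exact isClosed_closure
  have hTcount : T.Countable := (hcount.image _).insert _
  have hTU : ⋃₀ T = univ := by
    apply eq_univ_of_forall
    intro y
    by_cases hy : y ∈ U
    · exact ⟨closure (connectedComponentIn U y), Or.inr ⟨_, ⟨y, hy, rfl⟩, rfl⟩,
        subset_closure (mem_connectedComponentIn hy)⟩
    · exact ⟨Uᶜ, Or.inl rfl, hy⟩
  have hdense := dense_sUnion_interior_of_closed hTc hTcount hTU
  obtain ⟨u, hu⟩ := hUne
  obtain ⟨y, hymem, hyU⟩ := hdense.exists_mem_open hUopen ⟨u, hu⟩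
  simp only [mem_iUnion] at hymem
  obtain ⟨s, hsT, hys⟩ := hymem
  rcases hsT with rfl | ⟨C, ⟨x, hx, rfl⟩, rfl⟩
  · exact absurd hyU (interior_subset hys)
  · refine ⟨x, hx, y, ?_⟩
    have hVopen : IsOpen (interior (closure (connectedComponentIn U x)) ∩ U) :=
      isOpen_interior.inter hUopen
    have hVsub : interior (closure (connectedComponentIn U x)) ∩ U ⊆
        connectedComponentIn U x := fun z ⟨hz1, hz2⟩ =>
      closure_connectedComponentIn_inter hx ⟨interior_subset hz1, hz2⟩
    exact interior_maximal hVsub hVopen ⟨hys, hyU⟩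
end

section
/- Let Y be a hereditarily unicoherent continuum such that Y = H ∪ K where H and K are proper subcontinua of Y. Let C be a subcontinuum of Y with C ∩ (H ∩ K) = ∅, and let E_0 and E_1 be subcontinua of Y such that for each i ∈ {0,1}, E_i meets H ∖ K, E_i meets K ∖ H, and E_i meets C. Then E_0 ∩ E_1 ≠ ∅. -/
lemma aux_stmt12 {Y : Type*} [TopologicalSpace Y] [T2Space Y]
    (hHU : ∀ A B : Set Y,
      IsCompact A → IsConnected A → A.Nontrivial →
      IsCompact B → IsConnected B → B.Nontrivial →
      (A ∩ B).Nonempty → IsConnected (A ∩ B))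
    (K C E₀ E₁ : Set Y)
    (hK : IsCompact K ∧ IsConnected K ∧ K.Nontrivial)
    (hC : IsCompact C ∧ IsConnected C)
    (hE₀ : IsCompact E₀ ∧ IsConnected E₀)
    (hE₁ : IsCompact E₁ ∧ IsConnected E₁)
    (hCK : C ∩ K = ∅)
    (hE₀K : (E₀ ∩ K).Nonempty) (hE₁K : (E₁ ∩ K).Nonempty)
    (hE₀C : (E₀ ∩ C).Nonempty) (hE₁C : (E₁ ∩ C).Nonempty) :
    (E₀ ∩ E₁).Nonempty := by
  by_contra h
  have hdisj : ∀ x, x ∈ E₀ → x ∈ E₁ → False := by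
    intro x hx hy; exact h ⟨x, hx, hy⟩
  set A : Set Y := (E₀ ∪ K) ∪ C with hA
  set B : Set Y := (E₁ ∪ K) ∪ C with hB
  have hAc : IsConnected A :=
    ((hE₀.2.union hE₀K hK.2.1).union
      (by rcases hE₀C with ⟨x, hx1, hx2⟩; exact ⟨x, Or.inl hx1, hx2⟩) hC.2)
  have hBc : IsConnected B :=
    ((hE₁.2.union hE₁K hK.2.1).union
      (by rcases hE₁C with ⟨x, hx1, hx2⟩; exact ⟨x, Or.inl hx1, hx2⟩) hC.2)
  have hAcomp : IsCompact A := (hE₀.1.union hK.1).union hC.1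
  have hBcomp : IsCompact B := (hE₁.1.union hK.1).union hC.1
  have hKA : K ⊆ A := fun x hx => Or.inl (Or.inr hx)
  have hKB : K ⊆ B := fun x hx => Or.inl (Or.inr hx)
  have hABne : (A ∩ B).Nonempty := by
    rcases hK.2.2 with ⟨x, hx, -, -, -⟩
    exact ⟨x, hKA hx, hKB hx⟩
  have hint : IsConnected (A ∩ B) :=
    hHU A B hAcomp hAc (hK.2.2.mono hKA) hBcomp hBc (hK.2.2.mono hKB) hABne
  have hEK : ∀ x, x ∈ C → x ∈ K → False := by
    intro x hx hy
    have : x ∈ C ∩ K := ⟨hx, hy⟩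
    rw [hCK] at this; exact this
  have hAB : A ∩ B = K ∪ C := by
    ext x
    simp only [hA, hB, Set.mem_inter_iff, Set.mem_union]
    constructor
    · rintro ⟨(h0 | hk0) | hc0, (h1 | hk1) | hc1⟩ <;>
        first
        | exact Or.inl hk0
        | exact Or.inl hk1
        | exact Or.inr hc0
        | exact Or.inr hc1
        | exact absurd (hdisj x h0 h1) (fun f => f)
    · rintro (hk | hc)
      · exact ⟨Or.inl (Or.inr hk), Or.inl (Or.inr hk)⟩
      · exact ⟨Or.inr hc, Or.inr hc⟩
  rw [hAB] at hint
  -- K ∪ C is disconnected: K, C closed, disjoint, nonempty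
  have hKcl : IsClosed K := hK.1.isClosed
  have hCcl : IsClosed C := hC.1.isClosed
  have hCne : C.Nonempty := ⟨hE₀C.choose, hE₀C.choose_spec.2⟩
  have hKne : K.Nonempty := ⟨hE₀K.choose, hE₀K.choose_spec.2⟩
  have := (isPreconnected_closed_iff.mp hint.2) K C hKcl hCcl
    (by intro x hx; rcases hx with hk | hc
        · exact Or.inl hk
        · exact Or.inr hc)
    (⟨hKne.choose, Or.inl hKne.choose_spec, hKne.choose_spec⟩)
    (⟨hCne.choose, Or.inr hCne.choose_spec, hCne.choose_spec⟩)
  rcases this with ⟨x, -, hxK, hxC⟩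
  exact hEK x hxC hxK

/-- Let `Y` be a hereditarily unicoherent continuum with `Y = H ∪ K` for
proper subcontinua `H`, `K`. Let `C` be a subcontinuum of `Y` with `C ∩ (H ∩ K) = ∅`, and let
`E₀`, `E₁` be subcontinua each meeting `H \ K`, `K \ H`, and `C`. Then `E₀ ∩ E₁ ≠ ∅`. -/
theorem stmt_12 {Y : Type*} [TopologicalSpace Y] [CompactSpace Y] [ConnectedSpace Y]
    [TopologicalSpace.MetrizableSpace Y] [Nontrivial Y]
    (hHU : ∀ A B : Set Y,
      IsCompact A → IsConnected A → A.Nontrivial →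
      IsCompact B → IsConnected B → B.Nontrivial →
      (A ∩ B).Nonempty → IsConnected (A ∩ B))
    (H K : Set Y)
    (hH : IsCompact H ∧ IsConnected H ∧ H.Nontrivial) (hHproper : H ≠ Set.univ)
    (hK : IsCompact K ∧ IsConnected K ∧ K.Nontrivial) (hKproper : K ≠ Set.univ)
    (hHK : H ∪ K = Set.univ)
    (C : Set Y) (hC : IsCompact C ∧ IsConnected C ∧ C.Nontrivial)
    (hCdisj : C ∩ (H ∩ K) = ∅)
    (E₀ E₁ : Set Y)
    (hE₀ : IsCompact E₀ ∧ IsConnected E₀ ∧ E₀.Nontrivial)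
    (hE₁ : IsCompact E₁ ∧ IsConnected E₁ ∧ E₁.Nontrivial)
    (hE₀H : (E₀ ∩ (H \ K)).Nonempty) (hE₀K : (E₀ ∩ (K \ H)).Nonempty)
    (hE₀C : (E₀ ∩ C).Nonempty)
    (hE₁H : (E₁ ∩ (H \ K)).Nonempty) (hE₁K : (E₁ ∩ (K \ H)).Nonempty)
    (hE₁C : (E₁ ∩ C).Nonempty) :
    (E₀ ∩ E₁).Nonempty := by
  letI : T2Space Y := inferInstance
  -- C ⊆ H or C ⊆ K
  have hCHK : C ∩ K = ∅ ∨ C ∩ H = ∅ := by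
    by_contra hcon
    push_neg at hcon
    obtain ⟨h1, h2⟩ := hcon
    have hCK : (C ∩ K).Nonempty := h1
    have hCH : (C ∩ H).Nonempty := h2
    have := (isPreconnected_closed_iff.mp hC.2.1.2) H K hH.1.isClosed hK.1.isClosed
      (by rw [hHK]; exact Set.subset_univ C)
      ⟨hCH.choose, hCH.choose_spec.1, hCH.choose_spec.2⟩
      ⟨hCK.choose, hCK.choose_spec.1, hCK.choose_spec.2⟩
    rcases this with ⟨x, hxC, hxH, hxK⟩
    have : x ∈ C ∩ (H ∩ K) := ⟨hxC, hxH, hxK⟩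
    rw [hCdisj] at this; exact this
  rcases hCHK with hck | hch
  · exact aux_stmt12 hHU K C E₀ E₁ hK ⟨hC.1, hC.2.1⟩ ⟨hE₀.1, hE₀.2.1⟩ ⟨hE₁.1, hE₁.2.1⟩
      hck ⟨hE₀K.choose, hE₀K.choose_spec.1, hE₀K.choose_spec.2.1⟩
      ⟨hE₁K.choose, hE₁K.choose_spec.1, hE₁K.choose_spec.2.1⟩ hE₀C hE₁C
  · exact aux_stmt12 hHU H C E₀ E₁ hH ⟨hC.1, hC.2.1⟩ ⟨hE₀.1, hE₀.2.1⟩ ⟨hE₁.1, hE₁.2.1⟩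
      hch ⟨hE₀H.choose, hE₀H.choose_spec.1, hE₀H.choose_spec.2.1⟩
      ⟨hE₁H.choose, hE₁H.choose_spec.1, hE₁H.choose_spec.2.1⟩ hE₀C hE₁C
end

section
/- Let I be an indecomposable metric continuum, let p ∈ I, and let X be the composant of p in I, equipped with the subspace topology. Then X is an indecomposable semicontinuum: every two points of X lie in a subcontinuum of X, and X cannot be written as the union of two proper subsets each of which is closed in X and connected. -/
open Set Topology

/-- In a compact Hausdorff space, a closed set disjoint from the connected component of a point
can be separated from it by a clopen set. -/
lemma sep_clopen' {β : Type*} [TopologicalSpace β] [T2Space β] [CompactSpace β]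
    (p : β) (D : Set β) (hD : IsClosed D) (h : D ∩ connectedComponent p = ∅) :
    ∃ C : Set β, IsClopen C ∧ p ∈ C ∧ D ∩ C = ∅ := by
  rw [connectedComponent_eq_iInter_isClopen] at h
  obtain ⟨t, ht⟩ := hD.isCompact.elim_finite_subfamily_closed
    (fun s : {s : Set β // IsClopen s ∧ p ∈ s} => s.1) (fun s => s.2.1.1) h
  exact ⟨⋂ i ∈ t, i.1, isClopen_biInter_finset fun i _ => i.2.1,
    mem_iInter₂.2 fun i _ => i.2.2, ht⟩

/-- Boundary bumping: in a compact connected Hausdorff space, the connected component of a point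
in a proper closed set meets the frontier of that set. -/
lemma bump' {α : Type*} [TopologicalSpace α] [T2Space α] [CompactSpace α] [ConnectedSpace α]
    {F : Set α} (hF : IsClosed F) (hFne : F ≠ univ) {p : α} (hp : p ∈ F) :
    (connectedComponentIn F p ∩ frontier F).Nonempty := by
  by_contra h
  rw [not_nonempty_iff_eq_empty] at h
  haveI : CompactSpace F := isCompact_iff_compactSpace.1 hF.isCompact
  set q : F := ⟨p, hp⟩
  have hD : IsClosed ((Subtype.val : F → α) ⁻¹' frontier F) :=
    isClosed_frontier.preimage continuous_subtype_val
  have hdisj : ((Subtype.val : F → α) ⁻¹' frontier F) ∩ connectedComponent q = ∅ := by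
    rw [eq_empty_iff_forall_notMem]
    rintro ⟨x, hx⟩ ⟨hx1, hx2⟩
    have hxK : x ∈ connectedComponentIn F p := by
      rw [connectedComponentIn_eq_image hp]
      exact ⟨⟨x, hx⟩, hx2, rfl⟩
    exact eq_empty_iff_forall_notMem.1 h x ⟨hxK, hx1⟩
  obtain ⟨C, hC, hqC, hCD⟩ := sep_clopen' q _ hD hdisj
  set C' := (Subtype.val : F → α) '' C with hC'def
  have hC'F : C' ⊆ F := by rintro x ⟨⟨y, hy⟩, -, rfl⟩; exact hy
  have hC'int : C' ⊆ interior F := by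
    rintro x ⟨y, hyC, rfl⟩
    by_contra hxi
    have hfr : (y : α) ∈ frontier F := by
      rw [hF.frontier_eq]; exact ⟨y.2, hxi⟩
    exact eq_empty_iff_forall_notMem.1 hCD y ⟨hfr, hyC⟩
  have hC'closed : IsClosed C' := (hC.1.isCompact.image continuous_subtype_val).isClosed
  have hC'open : IsOpen C' := by
    obtain ⟨U, hU, hUC⟩ := isOpen_induced_iff.1 hC.2
    have : C' = U ∩ interior F := by
      have h1 : C' = U ∩ F := by
        rw [hC'def, ← hUC, Set.image_preimage_eq_inter_range, Subtype.range_coe]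
      apply Subset.antisymm
      · exact fun x hx => ⟨(h1 ▸ hx).1, hC'int hx⟩
      · exact fun x hx => h1 ▸ ⟨hx.1, interior_subset hx.2⟩
    rw [this]; exact hU.inter isOpen_interior
  rcases isClopen_iff.1 ⟨hC'closed, hC'open⟩ with h0 | h1
  · have hmem : (p : α) ∈ C' := ⟨q, hqC, rfl⟩
    rw [h0] at hmem
    exact hmem
  · exact hFne (univ_subset_iff.1 (h1 ▸ hC'F))

lemma connectedComponentIn_isCompact {α : Type*} [TopologicalSpace α] [T2Space α] [CompactSpace α]
    {F : Set α} (hF : IsClosed F) {p : α} (hp : p ∈ F) :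
    IsCompact (connectedComponentIn F p) := by
  haveI : CompactSpace F := isCompact_iff_compactSpace.1 hF.isCompact
  rw [connectedComponentIn_eq_image hp]
  exact isClosed_connectedComponent.isCompact.image continuous_subtype_val

/-- The composant of a point in a nondegenerate metric continuum is dense. -/
lemma composant_dense {α : Type*} [MetricSpace α] [CompactSpace α] [ConnectedSpace α]
    [Nontrivial α] (p : α) :
    Dense {x | ∃ K : Set α, IsCompact K ∧ IsConnected K ∧ K.Nontrivial ∧
      K ≠ univ ∧ p ∈ K ∧ x ∈ K} := by
  rw [dense_iff_inter_open]
  intro U hU hUne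
  by_cases hpU : p ∈ U
  · -- produce a proper subcontinuum containing p
    obtain ⟨q, hq⟩ := exists_ne p
    have hd : 0 < dist q p := dist_pos.2 hq
    set r := dist q p / 2 with hrdef
    have hr : 0 < r := by positivity
    have hr2 : r < dist q p := by rw [hrdef]; linarith
    set F := Metric.closedBall p r
    have hpF : p ∈ F := Metric.mem_closedBall_self hr.le
    have hFne : F ≠ univ := by
      intro hcon
      have : q ∈ F := hcon ▸ mem_univ q
      rw [Metric.mem_closedBall] at this
      linarith
    obtain ⟨y, hyK, hyfr⟩ := bump' Metric.isClosed_closedBall hFne hpF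
    have hynep : y ≠ p := by
      intro hcon
      have : y ∈ interior F := by
        apply mem_interior.2 ⟨Metric.ball p r, Metric.ball_subset_closedBall, Metric.isOpen_ball, ?_⟩
        rw [hcon]; exact Metric.mem_ball_self hr
      exact hyfr.2 this
    exact ⟨p, hpU, connectedComponentIn F p,
      connectedComponentIn_isCompact Metric.isClosed_closedBall hpF,
      (isConnected_connectedComponentIn_iff).2 hpF,
      ⟨y, hyK, p, mem_connectedComponentIn hpF, hynep⟩,
      fun hcon => hFne (univ_subset_iff.1 (hcon ▸ connectedComponentIn_subset F p)),
      mem_connectedComponentIn hpF, mem_connectedComponentIn hpF⟩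
  · obtain ⟨q, hqU⟩ := hUne
    obtain ⟨ε, hε, hball⟩ := Metric.isOpen_iff.1 hU q hqU
    set r := ε / 2 with hrdef
    have hr : 0 < r := by positivity
    have hrε : r < ε := by rw [hrdef]; linarith
    set F := (Metric.ball q r)ᶜ with hFdef
    have hpF : p ∈ F := by
      simp only [hFdef, mem_compl_iff, Metric.mem_ball, not_lt]
      have : ¬ dist p q < ε := fun hc => hpU (hball (Metric.mem_ball.2 hc))
      push_neg at this
      linarith
    have hFne : F ≠ univ := by
      intro hcon
      have : q ∈ F := hcon ▸ mem_univ q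
      simp [hFdef, Metric.mem_ball, hr] at this
    have hFcl : IsClosed F := Metric.isOpen_ball.isClosed_compl
    obtain ⟨y, hyK, hyfr⟩ := bump' hFcl hFne hpF
    have hyU : y ∈ U := by
      have : y ∈ frontier (Metric.ball q r) := by rwa [hFdef, frontier_compl] at hyfr
      have hy1 : y ∈ Metric.closedBall q r :=
        Metric.closure_ball_subset_closedBall this.1
      apply hball
      rw [Metric.mem_ball]
      rw [Metric.mem_closedBall] at hy1
      linarith
    have hynep : y ≠ p := fun hcon => hpU (hcon ▸ hyU)
    exact ⟨y, hyU, connectedComponentIn F p,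
      connectedComponentIn_isCompact hFcl hpF,
      (isConnected_connectedComponentIn_iff).2 hpF,
      ⟨y, hyK, p, mem_connectedComponentIn hpF, hynep⟩,
      fun hcon => hFne (univ_subset_iff.1 (hcon ▸ connectedComponentIn_subset F p)),
      mem_connectedComponentIn hpF, hyK⟩

/-- Let `I` be an indecomposable metric continuum, `p ∈ I`, and let `X` be the
composant of `p` in `I` with the subspace topology. Then `X` is an indecomposable semicontinuum:
every two points of `X` lie in a subcontinuum of `X`, and `X` is not the union of two proper
closed connected subsets (closed in `X`). -/
theorem stmt_13 {I : Type*} [MetricSpace I] [CompactSpace I] [ConnectedSpace I] [Nontrivial I]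
    (hindec : ¬ ∃ A B : Set I,
      IsClosed A ∧ IsConnected A ∧ A ≠ Set.univ ∧
      IsClosed B ∧ IsConnected B ∧ B ≠ Set.univ ∧ A ∪ B = Set.univ)
    (p : I) (X : Set I)
    (hX : X = {x | ∃ K : Set I, IsCompact K ∧ IsConnected K ∧ K.Nontrivial ∧
      K ≠ Set.univ ∧ p ∈ K ∧ x ∈ K}) :
    (∀ x y : X, ∃ K : Set X,
      IsCompact K ∧ IsConnected K ∧ K.Nontrivial ∧ x ∈ K ∧ y ∈ K) ∧
    ¬ ∃ A B : Set X,
      IsClosed A ∧ IsConnected A ∧ A ≠ Set.univ ∧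
      IsClosed B ∧ IsConnected B ∧ B ≠ Set.univ ∧ A ∪ B = Set.univ := by
  constructor
  · rintro ⟨x, hx⟩ ⟨y, hy⟩
    rw [hX] at hx hy
    obtain ⟨K1, hK1c, hK1conn, hK1nt, hK1ne, hpK1, hxK1⟩ := hx
    obtain ⟨K2, hK2c, hK2conn, hK2nt, hK2ne, hpK2, hyK2⟩ := hy
    have hKne : K1 ∪ K2 ≠ univ := fun h =>
      hindec ⟨K1, K2, hK1c.isClosed, hK1conn, hK1ne, hK2c.isClosed, hK2conn, hK2ne, h⟩
    have hKc : IsCompact (K1 ∪ K2) := hK1c.union hK2c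
    have hKconn : IsConnected (K1 ∪ K2) := hK1conn.union ⟨p, hpK1, hpK2⟩ hK2conn
    have hKnt : (K1 ∪ K2).Nontrivial := hK1nt.mono subset_union_left
    have hsub : K1 ∪ K2 ⊆ X := fun z hz =>
      hX ▸ ⟨K1 ∪ K2, hKc, hKconn, hKnt, hKne, Or.inl hpK1, hz⟩
    have himg : Subtype.val '' ((Subtype.val : X → I) ⁻¹' (K1 ∪ K2)) = K1 ∪ K2 := by
      rw [Set.image_preimage_eq_inter_range, Subtype.range_coe]
      exact inter_eq_left.2 hsub
    refine ⟨(Subtype.val : X → I) ⁻¹' (K1 ∪ K2), ?_, ?_, ?_, Or.inl hxK1, Or.inr hyK2⟩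
    · exact IsEmbedding.subtypeVal.isCompact_iff.2 (by rw [himg]; exact hKc)
    · refine ⟨⟨⟨x, hX ▸ ⟨K1, hK1c, hK1conn, hK1nt, hK1ne, hpK1, hxK1⟩⟩, Or.inl hxK1⟩, ?_⟩
      exact IsInducing.subtypeVal.isPreconnected_image.1 (by rw [himg]; exact hKconn.isPreconnected)
    · obtain ⟨a, ha, b, hb, hab⟩ := hKnt
      exact ⟨⟨a, hsub ha⟩, ha, ⟨b, hsub hb⟩, hb, by simpa [Subtype.ext_iff] using hab⟩
  · rintro ⟨A, B, hAcl, hAco, hAne, hBcl, hBco, hBne, hAB⟩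
    have hdense : closure X = univ := by rw [hX]; exact (composant_dense p).closure_eq
    set A' := (Subtype.val : X → I) '' A with hA'def
    set B' := (Subtype.val : X → I) '' B with hB'def
    have hcover : closure A' ∪ closure B' = univ := by
      rw [← closure_union, hA'def, hB'def, ← image_union, hAB, image_univ,
        Subtype.range_coe, hdense]
    have hA'conn : IsConnected (closure A') :=
      (hAco.image _ continuous_subtype_val.continuousOn).closure
    have hB'conn : IsConnected (closure B') :=
      (hBco.image _ continuous_subtype_val.continuousOn).closure
    have halt : closure A' = univ ∨ closure B' = univ := by
      by_contra hc
      push_neg at hc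
      exact hindec ⟨closure A', closure B', isClosed_closure, hA'conn, hc.1,
        isClosed_closure, hB'conn, hc.2, hcover⟩
    have key : ∀ S : Set X, IsClosed S → closure (Subtype.val '' S) = univ → S = univ := by
      intro S hS hcl
      obtain ⟨C, hC, hCS⟩ := isClosed_induced_iff.1 hS
      have hsubC : closure (Subtype.val '' S) ⊆ C := by
        apply closure_minimal ?_ hC
        rintro _ ⟨a, ha, rfl⟩
        rw [← hCS] at ha
        exact ha
      have hCuniv : C = univ := univ_subset_iff.1 (hcl ▸ hsubC)
      rw [← hCS, hCuniv, preimage_univ]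
    rcases halt with h | h
    · exact hAne (key A hAcl h)
    · exact hBne (key B hBcl h)
end
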